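/- arXiv:2311.12659 — 2 statements merged into one kernel-verified Lean document; each statement's English description precedes it below -/
import Mathlib

section
/- Let u(x₁,x₂) = cos(2πx₁/3) − 2·cos(πx₂/√3)·cos(πx₁/3). Then ∂u/∂x₂ > 0 at every interior point of the triangle T with vertices (0,0), (1,0), (0,√3), i.e. at every point with 0 < x₁ < 1, 0 < x₂ and x₂/√3 + x₁ < 1. -/
/-!
Differentiating in `x₂` gives `∂u/∂x₂ = (2π/√3) · sin(πx₂/√3) · cos(πx₁/3)`. On the interior of the
triangle `0 < x₂/√3 < 1` and `0 < x₁ < 1`, so both trigonometric factors are positive.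
-/

open Real

theorem hasDerivAt_cos_mul_div (a c x : ℝ) :
    HasDerivAt (fun t => cos (a * t / c)) (-sin (a * x / c) * (a / c)) x := by
  have hlin : HasDerivAt (fun t => a * t / c) (a / c) x := by
    simpa using ((hasDerivAt_id x).const_mul a).div_const c
  exact hlin.cos

theorem hasDerivAt_const_sub_two_mul_cos_mul (A B a c x : ℝ) :
    HasDerivAt (fun t => A - 2 * cos (a * t / c) * B) (2 * (a / c) * sin (a * x / c) * B) x :=
  (((hasDerivAt_cos_mul_div a c x).const_mul 2).mul_const B).const_sub A
    |>.congr_deriv (by ring)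

theorem sin_pi_mul_pos {s : ℝ} (hs₀ : 0 < s) (hs₁ : s < 1) : 0 < sin (π * s) :=
  sin_pos_of_pos_of_lt_pi (by positivity) (by nlinarith [pi_pos])

theorem cos_pi_mul_div_three_pos {x : ℝ} (hx₀ : 0 < x) (hx₁ : x < 1) : 0 < cos (π * x / 3) :=
  cos_pos_of_mem_Ioo ⟨by nlinarith [pi_pos], by nlinarith [pi_pos]⟩

/-- For `u(x₁,x₂) = cos(2πx₁/3) − 2 cos(πx₂/√3) cos(πx₁/3)`, the partial derivative
`∂u/∂x₂` is positive at every interior point of the triangle with vertices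
`(0,0)`, `(1,0)`, `(0,√3)`. -/
theorem stmt_1
    (u : ℝ → ℝ → ℝ)
    (hu : ∀ x₁ x₂ : ℝ, u x₁ x₂ =
      cos (2 * π * x₁ / 3) - 2 * cos (π * x₂ / Real.sqrt 3) * cos (π * x₁ / 3)) :
    ∀ x₁ x₂ : ℝ, 0 < x₁ → x₁ < 1 → 0 < x₂ → x₂ / Real.sqrt 3 + x₁ < 1 →
      0 < deriv (fun t => u x₁ t) x₂ := by
  intro x₁ x₂ hx₁ hx₁' hx₂ hT
  have hu' : (fun t => u x₁ t) =
      fun t => cos (2 * π * x₁ / 3) - 2 * cos (π * t / √3) * cos (π * x₁ / 3) :=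
    funext (hu x₁)
  rw [hu', (hasDerivAt_const_sub_two_mul_cos_mul _ _ π (√3) x₂).deriv]
  have hsin : 0 < sin (π * x₂ / √3) := by
    rw [mul_div_assoc]
    exact sin_pi_mul_pos (by positivity) (by linarith)
  have hcos := cos_pi_mul_div_three_pos hx₁ hx₁'
  positivity
end

section
/- Let l₁, l₂ > 0 and α ∈ [π/2, π). Then l₁² + l₂² − 2·l₁·l₂·cos(α) ≥ (2·l₁·l₂·cos(α/2)·2/(l₁+l₂))², i.e. the squared length of the side opposite the angle α in a triangle with adjacent sides l₁, l₂ is at least the square of twice the length 2l₁l₂cos(α/2)/(l₁+l₂) of the internal angle bisector from that vertex. -/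
open Real

/-!
Write `s = l₁ + l₂`, `p = l₁ l₂` and `t = cos² (α / 2)`. By the half-angle formula the squared
opposite side is `s² - 4 p t`, and the squared doubled bisector is `16 p² t / s²`; for an obtuse
angle `t ≤ 1 / 2`. The inequality becomes `4 p t (s² + 4 p) ≤ s⁴`, which for `t = 1 / 2` is
`(s² - 4 p) (s² + 2 p) ≥ 0`, true since `4 p ≤ s²` (AM-GM).
-/

lemma Real.cos_sq_half_le_half_of_cos_nonpos {x : ℝ} (hx : cos x ≤ 0) :
    cos (x / 2) ^ 2 ≤ 1 / 2 := by
  rw [cos_sq, mul_div_cancel₀ x two_ne_zero]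
  linarith

lemma sq_add_sq_sub_two_mul_mul_cos_eq (l₁ l₂ α : ℝ) :
    l₁ ^ 2 + l₂ ^ 2 - 2 * l₁ * l₂ * cos α =
      (l₁ + l₂) ^ 2 - 4 * (l₁ * l₂) * cos (α / 2) ^ 2 := by
  rw [cos_sq, mul_div_cancel₀ α two_ne_zero]
  ring

lemma sixteen_mul_sq_mul_div_sq_le {s p t : ℝ} (hs : s ≠ 0) (hp : 0 ≤ p)
    (hps : 4 * p ≤ s ^ 2) (ht : t ≤ 1 / 2) :
    16 * p ^ 2 * t / s ^ 2 ≤ s ^ 2 - 4 * p * t := by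
  have hpt : 4 * p * t ≤ 2 * p := by nlinarith
  have hfactor : 0 ≤ (s ^ 2 - 4 * p) * (s ^ 2 + 2 * p) := by
    apply mul_nonneg <;> nlinarith
  rw [div_le_iff₀ (by positivity)]
  calc 16 * p ^ 2 * t
      = 4 * p * t * (s ^ 2 + 4 * p) - 4 * p * t * s ^ 2 := by ring
    _ ≤ 2 * p * (s ^ 2 + 4 * p) - 4 * p * t * s ^ 2 :=
        sub_le_sub_right (mul_le_mul_of_nonneg_right hpt (by positivity)) _
    _ = s ^ 2 * s ^ 2 - (s ^ 2 - 4 * p) * (s ^ 2 + 2 * p) - 4 * p * t * s ^ 2 := by ring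
    _ ≤ (s ^ 2 - 4 * p * t) * s ^ 2 := by linarith

/-- For sides `l₁, l₂ > 0` meeting at an angle `α ∈ [π/2, π)`, the squared length of
the opposite side is at least the square of twice the internal bisector length. -/
theorem stmt_10 (l₁ l₂ α : ℝ) (hl₁ : 0 < l₁) (hl₂ : 0 < l₂)
    (hα1 : π / 2 ≤ α) (hα2 : α < π) :
    l₁ ^ 2 + l₂ ^ 2 - 2 * l₁ * l₂ * cos α ≥
      (2 * l₁ * l₂ * cos (α / 2) * 2 / (l₁ + l₂)) ^ 2 := by
  have hcos : cos α ≤ 0 := cos_nonpos_of_pi_div_two_le_of_le hα1 (by linarith [pi_pos])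
  rw [ge_iff_le, sq_add_sq_sub_two_mul_mul_cos_eq, div_pow,
    show (2 * l₁ * l₂ * cos (α / 2) * 2) ^ 2 = 16 * (l₁ * l₂) ^ 2 * cos (α / 2) ^ 2 by ring]
  exact sixteen_mul_sq_mul_div_sq_le (by positivity) (mul_pos hl₁ hl₂).le
    ((mul_assoc 4 l₁ l₂).symm.trans_le (four_mul_le_sq_add l₁ l₂))
    (cos_sq_half_le_half_of_cos_nonpos hcos)
end
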